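/- Let ω ∈ ℝ³ with θ = ‖ω‖ ≠ 0 and Ω = [ω]^∧. Then for every t ∈ ℝ, ∫₀ᵗ ∫₀ˢ exp(τΩ) dτ ds = (t²/2)·I₃ + ((θt − sin(θt))/θ³)·Ω + ((θ²t²/2 − 1 + cos(θt))/θ⁴)·Ω², where integrals of matrix-valued functions are taken entrywise. -/

import Mathlib

open Matrix

/-- The hat map `[ω]^∧`: the skew-symmetric matrix satisfying `([ω]^∧) x = ω × x`. -/
noncomputable def hat (ω : EuclideanSpace ℝ (Fin 3)) : Matrix (Fin 3) (Fin 3) ℝ :=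
  !![0, -ω 2, ω 1; ω 2, 0, -ω 0; -ω 1, ω 0, 0]

/-- The 3×2 matrix with the two given columns. -/
noncomputable def cols (u w : Fin 3 → ℝ) : Matrix (Fin 3) (Fin 2) ℝ :=
  Matrix.of fun i j => ![u i, w i] j

/-!
Since `Ω ^ 3 = -θ ^ 2 • Ω`, the curve
`G u = 1 + (sin (θu) / θ) • Ω + ((1 - cos (θu)) / θ²) • Ω²`
solves `G' = Ω G` with `G 0 = 1`, hence equals `exp (u • Ω)` (Rodrigues' formula): the function
`u ↦ exp ((t - u) • Ω) * G u` has zero derivative. Each entry of `exp (τ • Ω)` is therefore an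
explicit combination of `1`, `sin` and `cos`, and the double integral is obtained by exhibiting
primitives twice and applying the fundamental theorem of calculus.
-/

open NormedSpace

lemma hat_pow_three (ω : EuclideanSpace ℝ (Fin 3)) : hat ω ^ 3 = (-‖ω‖ ^ 2) • hat ω := by
  have hnorm : ‖ω‖ ^ 2 = ω 0 ^ 2 + ω 1 ^ 2 + ω 2 ^ 2 := by
    simp [EuclideanSpace.norm_sq_eq, Fin.sum_univ_three]
  ext i j
  fin_cases i <;> fin_cases j <;>
    simp [hat, pow_succ, Matrix.mul_apply, Fin.sum_univ_three, hnorm] <;> ring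

section Coefficients

variable {θ : ℝ}

lemma hasDerivAt_sin_mul_div (hθ : θ ≠ 0) (u : ℝ) :
    HasDerivAt (fun v => Real.sin (θ * v) / θ) (Real.cos (θ * u)) u := by
  refine ((((hasDerivAt_id' u).const_mul θ).sin).div_const θ).congr_deriv ?_
  field_simp

lemma hasDerivAt_one_sub_cos_mul_div (hθ : θ ≠ 0) (u : ℝ) :
    HasDerivAt (fun v => (1 - Real.cos (θ * v)) / θ ^ 2) (Real.sin (θ * u) / θ) u := by
  refine ((((hasDerivAt_id' u).const_mul θ).cos.const_sub 1).div_const (θ ^ 2)).congr_deriv ?_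
  field_simp

lemma hasDerivAt_mul_sub_sin_mul_div (hθ : θ ≠ 0) (u : ℝ) :
    HasDerivAt (fun v => (θ * v - Real.sin (θ * v)) / θ ^ 3)
      ((1 - Real.cos (θ * u)) / θ ^ 2) u := by
  have hθv := (hasDerivAt_id' u).const_mul θ
  refine ((hθv.sub hθv.sin).div_const (θ ^ 3)).congr_deriv ?_
  field_simp

lemma hasDerivAt_sq_sub_one_add_cos_mul_div (hθ : θ ≠ 0) (u : ℝ) :
    HasDerivAt (fun v => (θ ^ 2 * v ^ 2 / 2 - 1 + Real.cos (θ * v)) / θ ^ 4)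
      ((θ * u - Real.sin (θ * u)) / θ ^ 3) u := by
  refine ((((((hasDerivAt_pow 2 u).const_mul (θ ^ 2)).div_const 2).sub_const 1).add
    ((hasDerivAt_id' u).const_mul θ).cos).div_const (θ ^ 4)).congr_deriv ?_
  field_simp
  ring

lemma hasDerivAt_primitive_rodrigues_coeffs (hθ : θ ≠ 0) (x y z u : ℝ) :
    HasDerivAt
      (fun v => v * x + (1 - Real.cos (θ * v)) / θ ^ 2 * y + (θ * v - Real.sin (θ * v)) / θ ^ 3 * z)
      (x + Real.sin (θ * u) / θ * y + (1 - Real.cos (θ * u)) / θ ^ 2 * z) u :=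
  ((((hasDerivAt_id' u).mul_const x).add ((hasDerivAt_one_sub_cos_mul_div hθ u).mul_const y)).add
    ((hasDerivAt_mul_sub_sin_mul_div hθ u).mul_const z)).congr_deriv (by ring)

lemma hasDerivAt_second_primitive_rodrigues_coeffs (hθ : θ ≠ 0) (x y z u : ℝ) :
    HasDerivAt
      (fun v => v ^ 2 / 2 * x + (θ * v - Real.sin (θ * v)) / θ ^ 3 * y
        + (θ ^ 2 * v ^ 2 / 2 - 1 + Real.cos (θ * v)) / θ ^ 4 * z)
      (u * x + (1 - Real.cos (θ * u)) / θ ^ 2 * y + (θ * u - Real.sin (θ * u)) / θ ^ 3 * z) u :=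
  ((((hasDerivAt_pow 2 u).div_const 2).mul_const x).add
    ((hasDerivAt_mul_sub_sin_mul_div hθ u).mul_const y)).add
    ((hasDerivAt_sq_sub_one_add_cos_mul_div hθ u).mul_const z) |>.congr_deriv (by ring)

end Coefficients

theorem integral_eq_of_hasDerivAt {E : Type*} [NormedAddCommGroup E] [NormedSpace ℝ E]
    [CompleteSpace E] {f F : ℝ → E} (hF : ∀ u, HasDerivAt F (f u) u) (hf : Continuous f)
    (hF0 : F 0 = 0) (s : ℝ) : ∫ u in (0 : ℝ)..s, f u = F s := by
  rw [intervalIntegral.integral_eq_sub_of_hasDerivAt (fun u _ => hF u)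
    (hf.intervalIntegrable _ _), hF0, sub_zero]

section BanachAlgebra

variable {𝔸 : Type*} [NormedRing 𝔸] [NormedAlgebra ℝ 𝔸] [CompleteSpace 𝔸]

theorem eq_exp_smul_of_hasDerivAt {a : 𝔸} {G : ℝ → 𝔸} (hG : ∀ u, HasDerivAt G (a * G u) u)
    (hG0 : G 0 = 1) (t : ℝ) : G t = exp (t • a) := by
  have hK : ∀ u, HasDerivAt (fun v => exp ((t - v) • a) * G v) 0 u := fun u => by
    have hE := (hasDerivAt_exp_smul_const a (t - u)).scomp u ((hasDerivAt_id u).const_sub t)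
    have h := hE.mul (hG u)
    rwa [neg_one_smul, neg_mul, mul_assoc, Function.comp_apply, neg_add_cancel] at h
  simpa [hG0] using
    is_const_of_deriv_eq_zero (fun u => (hK u).differentiableAt) (fun u => (hK u).deriv) t 0

theorem exp_smul_eq_of_pow_three_eq {a : 𝔸} {θ : ℝ} (hθ : θ ≠ 0)
    (ha : a ^ 3 = (-θ ^ 2) • a) (t : ℝ) :
    exp (t • a) = 1 + (Real.sin (θ * t) / θ) • a + ((1 - Real.cos (θ * t)) / θ ^ 2) • a ^ 2 := by
  refine (eq_exp_smul_of_hasDerivAt (G := fun u =>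
    1 + (Real.sin (θ * u) / θ) • a + ((1 - Real.cos (θ * u)) / θ ^ 2) • a ^ 2)
    (fun u => ?_) (by simp) t).symm
  refine ((((hasDerivAt_sin_mul_div hθ u).smul_const a).const_add 1).add
    ((hasDerivAt_one_sub_cos_mul_div hθ u).smul_const (a ^ 2))).congr_deriv ?_
  have hcoeff : (1 - Real.cos (θ * u)) / θ ^ 2 * -θ ^ 2 = Real.cos (θ * u) - 1 := by
    field_simp
    ring
  rw [mul_add, mul_add, mul_one, mul_smul_comm, mul_smul_comm, ← pow_two, ← pow_succ', ha,
    smul_smul, hcoeff]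
  module

end BanachAlgebra

section HatExp

-- `exp` depends only on the topology, so any submultiplicative norm serves here.
attribute [local instance] Matrix.linftyOpNormedRing Matrix.linftyOpNormedAlgebra

theorem exp_smul_hat {ω : EuclideanSpace ℝ (Fin 3)} (hω : ω ≠ 0) (t : ℝ) :
    exp (t • hat ω) = 1 + (Real.sin (‖ω‖ * t) / ‖ω‖) • hat ω
      + ((1 - Real.cos (‖ω‖ * t)) / ‖ω‖ ^ 2) • hat ω ^ 2 :=
  exp_smul_eq_of_pow_three_eq (norm_ne_zero_iff.mpr hω) (hat_pow_three ω) t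

end HatExp

/-- The double integral of the matrix exponential, taken entrywise. -/
theorem stmt18 (ω : EuclideanSpace ℝ (Fin 3)) (θ : ℝ) (hθ : θ = ‖ω‖) (hθ0 : θ ≠ 0)
    (Ω : Matrix (Fin 3) (Fin 3) ℝ) (hΩ : Ω = hat ω)
    (F : ℝ → Matrix (Fin 3) (Fin 3) ℝ)
    (hF : ∀ s : ℝ, ∀ i j, F s i j = ∫ τ in (0 : ℝ)..s, NormedSpace.exp (τ • Ω) i j)
    (t : ℝ) :
    ∀ i j, (∫ s in (0 : ℝ)..t, F s i j) =
      ((t ^ 2 / 2) • (1 : Matrix (Fin 3) (Fin 3) ℝ)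
        + ((θ * t - Real.sin (θ * t)) / θ ^ 3) • Ω
        + ((θ ^ 2 * t ^ 2 / 2 - 1 + Real.cos (θ * t)) / θ ^ 4) • Ω ^ 2) i j := by
  intro i j
  set A := (1 : Matrix (Fin 3) (Fin 3) ℝ) i j
  set B := Ω i j
  set C := (Ω ^ 2) i j
  have hexp : ∀ τ, exp (τ • Ω) i j =
      A + Real.sin (θ * τ) / θ * B + (1 - Real.cos (θ * τ)) / θ ^ 2 * C := fun τ => by
    subst hΩ hθ
    simp [exp_smul_hat (norm_ne_zero_iff.mp hθ0) τ, A, B, C]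
  have hFij : ∀ s, F s i j =
      s * A + (1 - Real.cos (θ * s)) / θ ^ 2 * B + (θ * s - Real.sin (θ * s)) / θ ^ 3 * C :=
    fun s => by
    rw [hF, funext hexp]
    exact integral_eq_of_hasDerivAt (hasDerivAt_primitive_rodrigues_coeffs hθ0 A B C)
      (by fun_prop) (by simp) s
  rw [funext hFij, integral_eq_of_hasDerivAt
    (hasDerivAt_second_primitive_rodrigues_coeffs hθ0 A B C) (by fun_prop) (by simp)]
  simp [A, B, C]
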